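/- Let G be a finite simple graph and let α, β be vertices of G such that the transposition exchanging α and β (and fixing all other vertices) is an automorphism of G. Let {G_1, …, G_t} be a factorisation of G such that for each i, either α and β lie in the same connected component of G_i, or at least one of α, β lies on a cycle of G_i. Then there exists a factorisation {F_1, …, F_t} of G such that for each i: (1) F_i has the same number of edges as G_i; (2) every vertex v ∉ {α, β} has the same degree in F_i as in G_i; (3) F_i and G_i have exactly the same edges among vertices other than α and β; (4) |deg_{F_i}(α) − deg_{F_i}(β)| ≤ 1; and (5) α and β lie in the same connected component of F_i. -/

import Mathlib

/-!
Only the edges joining `α` or `β` to a common neighbour `w` are recoloured: for each such `w`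
either the colours of `αw` and `βw` are kept or they are exchanged. Because the transposition
`(α β)` is an automorphism of `G`, this permutes the edges of `G`, fixes every edge avoiding
`α` and `β`, and keeps the colours seen at each `w`; this gives (1)–(3).

Which `w` to flip is a balanced-orientation problem. Regard `αw` and `βw` as the two half-edges
of `w`. Inside each colour class, pair off the half-edges, leaving at most one unpaired.
Together with the pairing `αw ↔ βw` this is a union of two matchings, so it has a proper
2-colouring; attaching the half-edges of one colour to `α` and the rest to `β` balances every
class up to one, which is (4). If `αβ` is not an edge of `G_i`, the hypothesis on `G_i`
provides two half-edges of colour `i` whose far ends are joined in `G_i` by a walk avoiding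
`α` and `β`. Pairing these two with each other sends one to `α` and the other to `β`, so `α`
and `β` are joined in `F_i`, which is (5).
-/

open Finset

section Pairings

variable {X : Type*}

def IsInvolutionOn (s : Finset X) (μ : X → X) : Prop :=
  ∀ x ∈ s, μ x ∈ s ∧ μ (μ x) = x

def SeparatesPairs (s : Finset X) (μ : X → X) (f : X → Bool) : Prop :=
  ∀ x ∈ s, μ x ≠ x → f (μ x) = !f x

variable [DecidableEq X]

def IsNearPerfectPairing (s : Finset X) (μ : X → X) : Prop :=
  IsInvolutionOn s μ ∧ #{x ∈ s | μ x = x} ≤ 1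

lemma sdiff_pair_ssubset {s : Finset X} {a b : X} (ha : a ∈ s) (hb : b ∈ s) :
    s \ {a, b} ⊂ s :=
  sdiff_ssubset (by simp [insert_subset_iff, ha, hb]) (by simp)

lemma IsNearPerfectPairing.insert_pair {s : Finset X} {μ : X → X} {a b : X} (ha : a ∈ s)
    (hb : b ∈ s) (hab : a ≠ b) (hμ : IsNearPerfectPairing (s \ {a, b}) μ) :
    IsNearPerfectPairing s fun x => if x = a then b else if x = b then a else μ x := by
  obtain ⟨hinv, hfix⟩ := hμ
  refine ⟨fun x hx => ?_, ?_⟩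
  · by_cases hxa : x = a
    · simp [hxa, hab.symm, hb]
    by_cases hxb : x = b
    · simp [hxb, hab.symm, ha]
    have := hinv x (by simp [hx, hxa, hxb])
    simp_all
  · convert hfix using 2
    ext x
    by_cases hxa : x = a
    · simp [hxa, hab.symm]
    by_cases hxb : x = b
    · simp [hxb, hab, hab.symm]
    simp [hxa, hxb]

lemma exists_isNearPerfectPairing (s : Finset X) : ∃ μ, IsNearPerfectPairing s μ := by
  induction s using Finset.strongInduction with
  | H s ih =>
    by_cases hs : #s ≤ 1
    · exact ⟨id, fun x hx => ⟨hx, rfl⟩, (card_filter_le _ _).trans hs⟩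
    obtain ⟨a, ha, b, hb, hab⟩ := one_lt_card.mp (not_le.mp hs)
    obtain ⟨μ, hμ⟩ := ih _ (sdiff_pair_ssubset ha hb)
    exact ⟨_, hμ.insert_pair ha hb hab⟩

lemma exists_isNearPerfectPairing_with (s : Finset X) (P : X → X → Prop)
    (hP : ∀ x y, P x y → x ∈ s ∧ y ∈ s ∧ x ≠ y) :
    ∃ μ, IsNearPerfectPairing s μ ∧ ((∃ x y, P x y) → ∃ x y, P x y ∧ μ x = y) := by
  by_cases h : ∃ x y, P x y
  · obtain ⟨a, b, hab⟩ := h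
    obtain ⟨ha, hb, hne⟩ := hP a b hab
    obtain ⟨μ, hμ⟩ := exists_isNearPerfectPairing (s \ {a, b})
    exact ⟨_, hμ.insert_pair ha hb hne, fun _ => ⟨a, b, hab, by simp⟩⟩
  · obtain ⟨μ, hμ⟩ := exists_isNearPerfectPairing s
    exact ⟨μ, hμ, fun h' => absurd h' h⟩

lemma IsNearPerfectPairing.abs_card_sub_le {s : Finset X} {μ : X → X} {f : X → Bool}
    (hμ : IsNearPerfectPairing s μ) (hf : SeparatesPairs s μ f) :
    |(#{x ∈ s | f x = true} : ℤ) - #{x ∈ s | f x = false}| ≤ 1 := by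
  obtain ⟨hinv, hfix⟩ := hμ
  have hmoved : #{x ∈ s | f x = true ∧ μ x ≠ x} = #{x ∈ s | f x = false ∧ μ x ≠ x} := by
    refine card_nbij' μ μ ?_ ?_ (fun x hx => (hinv x (mem_filter.mp hx).1).2)
      (fun x hx => (hinv x (mem_filter.mp hx).1).2)
    all_goals
      intro x hx
      simp only [coe_filter, Set.mem_ofPred_eq] at hx ⊢
      obtain ⟨hxs, hfx, hμx⟩ := hx
      refine ⟨(hinv x hxs).1, by simp [hf x hxs hμx, hfx], fun h => hμx ?_⟩
      exact h.symm.trans (hinv x hxs).2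
  have hsplit : ∀ b : Bool, #{x ∈ s | f x = b} =
      #{x ∈ s | f x = b ∧ μ x ≠ x} + #{x ∈ s | f x = b ∧ μ x = x} := by
    intro b
    rw [← card_union_of_disjoint (disjoint_filter.mpr fun x _ h h' => h.2 h'.2), ← filter_or]
    congr 1
    ext
    simp only [mem_filter]
    tauto
  have hfixed : #{x ∈ s | f x = true ∧ μ x = x} + #{x ∈ s | f x = false ∧ μ x = x} ≤ 1 := by
    rw [← card_union_of_disjoint (disjoint_filter.mpr fun x _ h h' => by simp_all)]
    exact (card_le_card fun x => by simp only [mem_union, mem_filter]; tauto).trans hfix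
  have := hsplit true
  have := hsplit false
  rw [abs_le]
  omega

end Pairings

section TwoMatchings

variable {X : Type*} [DecidableEq X]

def rewire (τ : X → X) (a b : X) (x : X) : X :=
  if x = τ a then τ b else if x = τ b then τ a else τ x

variable {s : Finset X} {τ μ : X → X} {a b : X}

lemma rewire_spec (hτ : IsInvolutionOn s τ) (hτ' : ∀ x ∈ s, τ x ≠ x) (ha : a ∈ s) (hb : b ∈ s)
    (hab : a ≠ b) :
    IsInvolutionOn (s \ {a, b}) (rewire τ a b) ∧ ∀ x ∈ s \ {a, b}, rewire τ a b x ≠ x := by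
  have hinj : ∀ x ∈ s, ∀ y ∈ s, τ x = τ y → x = y := fun x hx y hy h => by
    rw [← (hτ x hx).2, h, (hτ y hy).2]
  have := hτ a ha
  have := hτ b hb
  have := hτ' a ha
  have := hτ' b hb
  refine ⟨fun x hx => ?_, fun x hx => ?_⟩ <;>
  · simp only [mem_sdiff, mem_insert, mem_singleton, not_or] at hx ⊢
    have := hτ x hx.1
    unfold rewire
    grind

/-- Contracting the `μ`-closed pair `{a, b}`: `rewire τ a b` joins `τ a` to `τ b`, and a colouring
of what remains extends by colouring `a` opposite to `τ a` and `b` like `τ a`. -/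
lemma exists_separatesPairs_of_rewire (hτ : IsInvolutionOn s τ)
    (hμ : IsInvolutionOn s μ) (ha : a ∈ s) (hb : b ∈ s)
    (hμab : μ a = b ∨ μ a = a ∧ μ b = b) {f : X → Bool}
    (hfτ : SeparatesPairs (s \ {a, b}) (rewire τ a b) f)
    (hfμ : SeparatesPairs (s \ {a, b}) μ f) :
    ∃ g, SeparatesPairs s τ g ∧ SeparatesPairs s μ g := by
  set g := fun x => if x = a then !f (τ a) else if x = b then f (τ a) else f x
  have := hτ a ha
  have := hτ b hb
  have := hμ a ha
  refine ⟨g, fun x hx _ => ?_, fun x hx hμx => ?_⟩ <;>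
  · have := hτ x hx
    have := hμ x hx
    have hfb := hfτ (τ b)
    have hfx := hfτ x
    have hfμ := hfμ x
    simp only [mem_sdiff, mem_insert, mem_singleton, not_or, rewire] at *
    grind

theorem exists_separatesPairs_of_isInvolutionOn (hτ : IsInvolutionOn s τ)
    (hτ' : ∀ x ∈ s, τ x ≠ x) (hμ : IsInvolutionOn s μ) :
    ∃ f, SeparatesPairs s τ f ∧ SeparatesPairs s μ f := by
  induction s using Finset.strongInduction generalizing τ with
  | H s ih =>
    obtain rfl | ⟨a₀, ha₀⟩ := s.eq_empty_or_nonempty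
    · exact ⟨fun _ => true, by simp [SeparatesPairs], by simp [SeparatesPairs]⟩
    obtain ⟨a, ha, b, hb, hab, hμab⟩ :
        ∃ a ∈ s, ∃ b ∈ s, a ≠ b ∧ (μ a = b ∨ μ a = a ∧ μ b = b) := by
      by_cases h : ∃ a ∈ s, μ a ≠ a
      · obtain ⟨a, ha, hμa⟩ := h
        exact ⟨a, ha, μ a, (hμ a ha).1, hμa.symm, .inl rfl⟩
      · push Not at h
        exact ⟨a₀, ha₀, τ a₀, (hτ a₀ ha₀).1, (hτ' a₀ ha₀).symm,
          .inr ⟨h a₀ ha₀, h _ (hτ a₀ ha₀).1⟩⟩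
    have hμ' : IsInvolutionOn (s \ {a, b}) μ := by
      intro x hx
      simp only [mem_sdiff, mem_insert, mem_singleton, not_or] at hx ⊢
      have := hμ x hx.1
      have := hμ a ha
      grind
    obtain ⟨hτ₁, hτ₁'⟩ := rewire_spec hτ hτ' ha hb hab
    obtain ⟨f, hfτ, hfμ⟩ := ih _ (sdiff_pair_ssubset ha hb) hτ₁ hτ₁' hμ'
    exact exists_separatesPairs_of_rewire hτ hμ ha hb hμab hfτ hfμ

end TwoMatchings

section Orientation

variable {W ι : Type*}

lemma card_filter_section (N : Finset W) (P : W × Bool → Prop) [DecidablePred P]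
    (σ : W → Bool) :
    #{w ∈ N | P (w, σ w)} = #{x ∈ N ×ˢ univ | P x ∧ x.2 = σ x.1} := by
  refine card_nbij' (fun w => (w, σ w)) Prod.fst ?_ ?_ (fun _ _ => rfl) ?_
  · intro w hw
    simp_all
  · rintro ⟨w, b⟩ hx
    simp only [coe_filter, mem_product, mem_univ, and_true, Set.mem_ofPred_eq] at hx ⊢
    obtain ⟨hw, hP, rfl⟩ := hx
    exact ⟨hw, hP⟩
  · rintro ⟨w, b⟩ hx
    simp only [coe_filter, mem_product, mem_univ, and_true, Set.mem_ofPred_eq] at hx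
    simp [hx.2.2]

theorem exists_separatesPairs_balanced {X : Type*} [DecidableEq X] [DecidableEq ι]
    {s : Finset X} {τ : X → X} (hτ : IsInvolutionOn s τ) (hτ' : ∀ x ∈ s, τ x ≠ x) (κ : X → ι)
    (D : ι → X → X → Prop) (hD : ∀ i x y, D i x y → x ∈ s ∧ y ∈ s ∧ κ x = i ∧ κ y = i ∧ x ≠ y) :
    ∃ f, SeparatesPairs s τ f ∧
      (∀ i, |(#{x ∈ s | κ x = i ∧ f x = true} : ℤ) - #{x ∈ s | κ x = i ∧ f x = false}| ≤ 1) ∧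
      ∀ i, (∃ x y, D i x y) → ∃ x y, D i x y ∧ f y = !f x := by
  have hpair (i : ι) := exists_isNearPerfectPairing_with {x ∈ s | κ x = i} (D i) fun x y h => by
    obtain ⟨hx, hy, hκx, hκy, hne⟩ := hD i x y h
    exact ⟨mem_filter.mpr ⟨hx, hκx⟩, mem_filter.mpr ⟨hy, hκy⟩, hne⟩
  choose μ hμ hμD using hpair
  have hμκ : ∀ x ∈ s, μ (κ x) x ∈ {y ∈ s | κ y = κ x} ∧ μ (κ x) (μ (κ x) x) = x := fun x hx =>
    (hμ (κ x)).1 x (mem_filter.mpr ⟨hx, rfl⟩)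
  obtain ⟨f, hfτ, hfμ⟩ := exists_separatesPairs_of_isInvolutionOn (μ := fun x => μ (κ x) x)
    hτ hτ' fun x hx => by
      obtain ⟨hμx, hμμx⟩ := hμκ x hx
      refine ⟨(mem_filter.mp hμx).1, ?_⟩
      beta_reduce
      rwa [(mem_filter.mp hμx).2]
  refine ⟨f, hfτ, fun i => ?_, fun i h => ?_⟩
  · simp only [← filter_filter]
    refine (hμ i).abs_card_sub_le fun x hx hne => ?_
    obtain ⟨hxs, rfl⟩ := mem_filter.mp hx
    exact hfμ x hxs hne
  · obtain ⟨x, y, hxy, hμxy⟩ := hμD i h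
    obtain ⟨hx, -, rfl, -, hne⟩ := hD i x y hxy
    refine ⟨x, y, hxy, ?_⟩
    have := hfμ x hx
    simp only [hμxy] at this
    exact this hne.symm

theorem exists_balanced_orientation [DecidableEq ι] (N : Finset W) (κ : W × Bool → ι)
    (D : ι → W × Bool → W × Bool → Prop)
    (hD : ∀ i x y, D i x y → x.1 ∈ N ∧ y.1 ∈ N ∧ κ x = i ∧ κ y = i ∧ x ≠ y) :
    ∃ σ : W → Bool,
      (∀ i, |(#{w ∈ N | κ (w, σ w) = i} : ℤ) - #{w ∈ N | κ (w, !σ w) = i}| ≤ 1) ∧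
      ∀ i, (∃ x y, D i x y) → ∃ x y, D i x y ∧
        (x.2 = σ x.1 ∧ y.2 = !σ y.1 ∨ x.2 = !σ x.1 ∧ y.2 = σ y.1) := by
  classical
  obtain ⟨f, hfτ, hbal, hsep⟩ := exists_separatesPairs_balanced (s := N ×ˢ univ)
    (τ := fun x => (x.1, !x.2)) (fun x hx => ⟨by simpa using hx, by simp⟩)
    (fun x _ => by simp [Prod.ext_iff]) κ D fun i x y h => by
      obtain ⟨hx, hy, h'⟩ := hD i x y h
      exact ⟨by simpa using hx, by simpa using hy, h'⟩
  have hfσ : ∀ x ∈ N ×ˢ univ, f x = true ↔ x.2 = f (x.1, true) := by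
    rintro ⟨w, b⟩ hx
    have hflip := hfτ (w, false) (by simpa using hx) (by simp)
    simp only [Bool.not_false] at hflip
    cases b
    · rw [hflip]
      cases f (w, false) <;> simp
    · exact eq_comm
  refine ⟨fun w => f (w, true), fun i => ?_, fun i h => ?_⟩
  · have hcard : ∀ b, #{w ∈ N | κ (w, b ^^ f (w, true)) = i} =
        #{x ∈ N ×ˢ univ | κ x = i ∧ f x = !b} := by
      intro b
      rw [card_filter_section N (fun x => κ x = i) (fun w => b ^^ f (w, true))]
      refine congrArg _ (filter_congr fun x hx => ?_)
      have := hfσ x hx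
      grind
    have h₀ := hcard false
    have h₁ := hcard true
    simp only [Bool.false_xor, Bool.true_xor, Bool.not_false, Bool.not_true] at h₀ h₁
    rw [h₀, h₁]
    exact hbal i
  · obtain ⟨x, y, hxy, hfxy⟩ := hsep i h
    obtain ⟨hx, hy, -⟩ := hD i x y hxy
    have hσx := hfσ x (by simpa using hx)
    have hσy := hfσ y (by simpa using hy)
    refine ⟨x, y, hxy, ?_⟩
    grind

end Orientation

lemma Set.ncard_sub_ncard_eq_of_mem_iff {X : Type*} [Finite X] {A B : Set X} {a b : X}
    (h : a ∈ A ↔ b ∈ B) :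
    (A.ncard : ℤ) - B.ncard = ((A \ {a}).ncard : ℤ) - (B \ {b}).ncard := by
  by_cases ha : a ∈ A
  · rw [← Set.ncard_sdiff_singleton_add_one ha, ← Set.ncard_sdiff_singleton_add_one (h.mp ha)]
    push_cast
    ring
  · rw [Set.sdiff_singleton_eq_self ha, Set.sdiff_singleton_eq_self (mt h.mpr ha)]

namespace SimpleGraph

variable {V : Type*} {H : SimpleGraph V}

lemma Walk.IsPath.exists_walk_avoiding_end {v u : V} {p : H.Walk v u} (hp : p.IsPath)
    (hvu : v ≠ u) :
    ∃ w, H.Adj w u ∧ s(w, u) ∈ p.edges ∧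
      ∃ r : H.Walk v w, u ∉ r.support ∧ r.support ⊆ p.support := by
  have hnil : ¬p.Nil := Walk.not_nil_of_ne hvu
  refine ⟨p.penultimate, p.adj_penultimate hnil, p.mk_penultimate_end_mem_edges hnil, p.dropLast,
    ?_, ?_⟩
  · have := hp.support_nodup
    rw [← Walk.support_dropLast_concat hnil, ← List.concat_eq_append, List.nodup_concat] at this
    exact this.1
  · rw [Walk.support_dropLast hnil]
    exact List.dropLast_subset _

lemma Reachable.exists_walk_avoiding {u z : V} (h : H.Reachable u z) (huz : u ≠ z)
    (hadj : ¬H.Adj u z) :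
    ∃ v w, H.Adj u v ∧ H.Adj z w ∧ ∃ r : H.Walk v w, u ∉ r.support ∧ z ∉ r.support := by
  classical
  obtain ⟨p⟩ := h
  cases hq : p.bypass with
  | nil => exact absurd rfl huz
  | @cons _ v _ huv q =>
    have hq' := p.bypass_isPath
    rw [hq, Walk.cons_isPath_iff] at hq'
    have hvz : v ≠ z := by rintro rfl; exact hadj huv
    obtain ⟨w, hwz, -, r, hzr, hrq⟩ := hq'.1.exists_walk_avoiding_end hvz
    exact ⟨v, w, huv, hwz.symm, r, fun hu => hq'.2 (hrq hu), hzr⟩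

lemma Walk.IsCycle.exists_walk_avoiding {u : V} {c : H.Walk u u} (hc : c.IsCycle) :
    ∃ v w, v ≠ w ∧ H.Adj u v ∧ H.Adj u w ∧
      ∃ r : H.Walk v w, u ∉ r.support ∧ r.support ⊆ c.support := by
  cases c with
  | nil => exact absurd hc Walk.not_isCycle_nil
  | @cons _ v _ huv q =>
    rw [Walk.cons_isCycle_iff] at hc
    obtain ⟨w, hwu, hwq, r, hur, hrq⟩ := hc.1.exists_walk_avoiding_end huv.ne.symm
    refine ⟨v, w, ?_, huv, hwu.symm, r, hur, fun x hx => List.mem_cons_of_mem _ (hrq hx)⟩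
    rintro rfl
    exact hc.2 (Sym2.eq_swap ▸ hwq)

lemma exists_walk_avoiding_of_reachable_or_isCycle {H : SimpleGraph V} {α β : V} (hαβ : α ≠ β)
    (hnadj : ¬H.Adj α β)
    (h : H.Reachable α β ∨ (∃ p : H.Walk α α, p.IsCycle) ∨ ∃ p : H.Walk β β, p.IsCycle) :
    ∃ x y : V × Bool, x ≠ y ∧ H.Adj (bif x.2 then β else α) x.1 ∧
      H.Adj (bif y.2 then β else α) y.1 ∧ ∃ p : H.Walk x.1 y.1, α ∉ p.support ∧ β ∉ p.support := by
  classical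
  by_cases hr : H.Reachable α β
  · obtain ⟨v, w, hv, hw, r, hαr, hβr⟩ := hr.exists_walk_avoiding hαβ hnadj
    exact ⟨(v, false), (w, true), by simp, hv, hw, r, hαr, hβr⟩
  obtain hr' | ⟨p, hp⟩ | ⟨p, hp⟩ := h
  · exact absurd hr' hr
  · obtain ⟨v, w, hvw, hv, hw, r, hαr, hrp⟩ := hp.exists_walk_avoiding
    have hβp : β ∉ p.support := fun hβ => hr ⟨p.takeUntil β hβ⟩
    exact ⟨(v, false), (w, false), by simpa, hv, hw, r, hαr, fun hβ => hβp (hrp hβ)⟩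
  · obtain ⟨v, w, hvw, hv, hw, r, hβr, hrp⟩ := hp.exists_walk_avoiding
    have hαp : α ∉ p.support := fun hα => hr ⟨(p.takeUntil α hα).reverse⟩
    exact ⟨(v, true), (w, true), by simpa, hv, hw, r, fun hα => hαp (hrp hα), hβr⟩

lemma Walk.reachable_of_adj_imp {H F : SimpleGraph V} {u v : V} (p : H.Walk u v)
    (h : ∀ x ∈ p.support, ∀ y ∈ p.support, H.Adj x y → F.Adj x y) : F.Reachable u v := by
  induction p with
  | nil => rfl
  | cons hxy q ih =>
    refine (h _ (by simp) _ (by simp) hxy).reachable.trans (ih fun x hx y hy => h x ?_ y ?_) <;>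
      simp [hx, hy]

end SimpleGraph

namespace Sym2

variable {V : Type*} [DecidableEq V]

def swapIfMeets (α β : V) (S : Finset V) (e : Sym2 V) : Sym2 V :=
  if ∃ v ∈ S, v ∈ e then e.map (Equiv.swap α β) else e

variable {α β : V} {S : Finset V}

lemma map_swap_map_swap (e : Sym2 V) : (e.map (Equiv.swap α β)).map (Equiv.swap α β) = e := by
  simp [map_map]

lemma swapIfMeets_of_notMem {u w : V} (hu : u ∉ S) (hw : w ∉ S) :
    swapIfMeets α β S s(u, w) = s(u, w) := by
  rw [swapIfMeets, if_neg]
  rintro ⟨v, hv, hve⟩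
  rcases mem_iff.mp hve with rfl | rfl <;> contradiction

lemma swapIfMeets_of_ne {u w : V} (huα : u ≠ α) (huβ : u ≠ β) (hwα : w ≠ α) (hwβ : w ≠ β) :
    swapIfMeets α β S s(u, w) = s(u, w) := by
  unfold swapIfMeets
  split_ifs <;> simp [Equiv.swap_apply_of_ne_of_ne, *]

variable (hα : α ∉ S) (hβ : β ∉ S)
include hα hβ

lemma swapIfMeets_of_mem {v : V} (hv : v ∈ S) (w : V) :
    swapIfMeets α β S s(v, w) = s(v, Equiv.swap α β w) := by
  rw [swapIfMeets, if_pos ⟨v, hv, mem_mk_left v w⟩, map_mk,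
    Equiv.swap_apply_of_ne_of_ne (ne_of_mem_of_not_mem hv hα) (ne_of_mem_of_not_mem hv hβ)]

lemma swapIfMeets_of_notMem_of_ne {v : V} (hv : v ∉ S) (hvα : v ≠ α) (hvβ : v ≠ β) (w : V) :
    swapIfMeets α β S s(v, w) = s(v, w) := by
  by_cases hw : w ∈ S
  · rw [eq_swap, swapIfMeets_of_mem hα hβ hw, Equiv.swap_apply_of_ne_of_ne hvα hvβ]
  · exact swapIfMeets_of_notMem hv hw

lemma swapIfMeets_involutive : Function.Involutive (swapIfMeets α β S) := by
  have hmeets : ∀ e : Sym2 V, (∃ v ∈ S, v ∈ e.map (Equiv.swap α β)) ↔ ∃ v ∈ S, v ∈ e := by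
    intro e
    refine exists_congr fun v => and_congr_right fun hv => ?_
    have hswapv : Equiv.swap α β v = v :=
      Equiv.swap_apply_of_ne_of_ne (ne_of_mem_of_not_mem hv hα) (ne_of_mem_of_not_mem hv hβ)
    rw [mem_map]
    constructor
    · rintro ⟨u, hu, huv⟩
      rw [Equiv.swap_apply_eq_iff, hswapv] at huv
      exact huv ▸ hu
    · exact fun h => ⟨v, h, hswapv⟩
  intro e
  by_cases he : ∃ v ∈ S, v ∈ e
  · have h : swapIfMeets α β S e = e.map (Equiv.swap α β) := if_pos he
    rw [h, swapIfMeets, if_pos ((hmeets e).mpr he), map_swap_map_swap]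
  · have h : swapIfMeets α β S e = e := if_neg he
    rw [h, h]

end Sym2

namespace SimpleGraph

variable {V ι : Type*}

def edgeColorClass (G : SimpleGraph V) (c : Sym2 V → ι) (i : ι) : SimpleGraph V where
  Adj u v := G.Adj u v ∧ c s(u, v) = i
  symm := ⟨fun _ _ h => ⟨h.1.symm, Sym2.eq_swap ▸ h.2⟩⟩
  loopless := ⟨fun _ h => G.irrefl h.1⟩

variable {G : SimpleGraph V} {c : Sym2 V → ι} {i : ι}

@[simp]
lemma edgeColorClass_adj {u v : V} :
    (G.edgeColorClass c i).Adj u v ↔ G.Adj u v ∧ c s(u, v) = i :=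
  Iff.rfl

lemma edgeColorClass_le : G.edgeColorClass c i ≤ G := fun _ _ h => h.1

lemma mem_edgeSet_edgeColorClass {e : Sym2 V} :
    e ∈ (G.edgeColorClass c i).edgeSet ↔ e ∈ G.edgeSet ∧ c e = i := by
  induction e using Sym2.ind
  simp

lemma existsUnique_mem_edgeSet_edgeColorClass {e : Sym2 V} (he : e ∈ G.edgeSet) :
    ∃! i, e ∈ (G.edgeColorClass c i).edgeSet :=
  ⟨c e, mem_edgeSet_edgeColorClass.mpr ⟨he, rfl⟩,
    fun _ h => (mem_edgeSet_edgeColorClass.mp h).2.symm⟩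

lemma exists_eq_edgeColorClass [Nonempty ι] {Gi : ι → SimpleGraph V} (hle : ∀ i, Gi i ≤ G)
    (hpart : ∀ e ∈ G.edgeSet, ∃! i, e ∈ (Gi i).edgeSet) : ∃ c, Gi = G.edgeColorClass c := by
  classical
  refine ⟨fun e => if h : e ∈ G.edgeSet then (hpart e h).choose else Classical.arbitrary ι,
    funext fun i => ?_⟩
  ext u v
  simp only [edgeColorClass_adj]
  constructor
  · intro h
    have he : s(u, v) ∈ G.edgeSet := hle i h
    exact ⟨hle i h, by rw [dif_pos he]; exact ((hpart _ he).choose_spec.2 i h).symm⟩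
  · rintro ⟨h, rfl⟩
    have he : s(u, v) ∈ G.edgeSet := h
    rw [dif_pos he]
    exact (hpart _ he).choose_spec.1

lemma ncard_edgeSet_edgeColorClass_comp {Φ : Sym2 V → Sym2 V} (hΦ : Function.Involutive Φ)
    (hG : ∀ e, Φ e ∈ G.edgeSet ↔ e ∈ G.edgeSet) :
    (G.edgeColorClass (c ∘ Φ) i).edgeSet.ncard = (G.edgeColorClass c i).edgeSet.ncard := by
  have : (G.edgeColorClass (c ∘ Φ) i).edgeSet = Φ ⁻¹' (G.edgeColorClass c i).edgeSet := by
    ext e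
    simp [mem_edgeSet_edgeColorClass, hG]
  rw [this, Set.ncard_preimage_of_injective_subset_range hΦ.injective
    (fun e _ => hΦ.surjective e)]

lemma ncard_neighborSet_edgeColorClass_comp {Φ : Sym2 V → Sym2 V} {v : V} {g : V → V}
    (hg : Function.Involutive g) (hΦ : ∀ w, Φ s(v, w) = s(v, g w))
    (hG : ∀ w, G.Adj v (g w) ↔ G.Adj v w) :
    ((G.edgeColorClass (c ∘ Φ) i).neighborSet v).ncard =
      ((G.edgeColorClass c i).neighborSet v).ncard := by
  have : (G.edgeColorClass (c ∘ Φ) i).neighborSet v =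
      g ⁻¹' (G.edgeColorClass c i).neighborSet v := by
    ext w
    simp [hΦ, hG]
  rw [this, Set.ncard_preimage_of_injective_subset_range hg.injective
    (fun w _ => hg.surjective w)]

lemma neighborSet_edgeColorClass_diff_singleton [DecidableEq ι] {γ δ : V} {N : Finset V}
    (hδN : δ ∉ N) (hN : ∀ w, w ≠ δ → (G.Adj γ w ↔ w ∈ N)) :
    (G.edgeColorClass c i).neighborSet γ \ {δ} = ↑({w ∈ N | c s(γ, w) = i}) := by
  ext w
  by_cases hw : w = δ
  · simp [hw, hδN]
  · simp [hw, hN w hw]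

open Sym2

section Recoloring

variable {V ι : Type*}

def halfEdgeColor (c : Sym2 V → ι) (α β : V) (x : V × Bool) : ι :=
  c s(bif x.2 then β else α, x.1)

lemma notMem_of_forall_mem_iff {G : SimpleGraph V} {α β : V} {N S : Finset V} {σ : V → Bool}
    (hN : ∀ w, w ∈ N ↔ G.Adj α w ∧ G.Adj β w) (hS : ∀ w, w ∈ S ↔ w ∈ N ∧ σ w) :
    α ∉ S ∧ β ∉ S :=
  ⟨fun h => G.loopless.irrefl α ((hN α).mp ((hS α).mp h).1).1,
    fun h => G.loopless.irrefl β ((hN β).mp ((hS β).mp h).1).2⟩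

variable [DecidableEq V] {G : SimpleGraph V} {α β : V} {N S : Finset V} {σ : V → Bool}
  {c : Sym2 V → ι} {i : ι}
  (hswap : ∀ u v, G.Adj u v ↔ G.Adj (Equiv.swap α β u) (Equiv.swap α β v))
  (hN : ∀ w, w ∈ N ↔ G.Adj α w ∧ G.Adj β w) (hS : ∀ w, w ∈ S ↔ w ∈ N ∧ σ w)

include hswap in
lemma swapIfMeets_mem_edgeSet_iff (e : Sym2 V) :
    swapIfMeets α β S e ∈ G.edgeSet ↔ e ∈ G.edgeSet := by
  unfold swapIfMeets
  split_ifs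
  · induction e using Sym2.ind
    simp [← hswap]
  · rfl

include hswap hN in
lemma adj_cond_iff_mem (b : Bool) {w : V} (hw : w ≠ bif b then α else β) :
    G.Adj (bif b then β else α) w ↔ w ∈ N := by
  have hαβw : ∀ w, w ≠ α → w ≠ β → (G.Adj α w ↔ G.Adj β w) := fun w hwα hwβ => by
    rw [hswap α w, Equiv.swap_apply_left, Equiv.swap_apply_of_ne_of_ne hwα hwβ]
  rw [hN]
  cases b <;> simp only [cond_false, cond_true] at hw ⊢
  · exact ⟨fun h => ⟨h, (hαβw w (G.ne_of_adj h).symm hw).mp h⟩, And.left⟩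
  · exact ⟨fun h => ⟨(hαβw w hw (G.ne_of_adj h).symm).mpr h, h⟩, And.right⟩

include hN hS in
lemma swapIfMeets_cond {w : V} (hw : w ∈ N) (b : Bool) :
    swapIfMeets α β S s(bif b then β else α, w) = s(bif b ^^ σ w then β else α, w) := by
  obtain ⟨hα, hβ⟩ := notMem_of_forall_mem_iff hN hS
  obtain ⟨hwα, hwβ⟩ := (hN w).mp hw
  rw [eq_swap, eq_swap (b := w)]
  by_cases hσ : σ w
  · rw [swapIfMeets_of_mem hα hβ ((hS w).mpr ⟨hw, hσ⟩)]
    cases b <;> simp [hσ]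
  · rw [swapIfMeets_of_notMem_of_ne hα hβ (by simp [hS, hσ]) (G.ne_of_adj hwα).symm
      (G.ne_of_adj hwβ).symm]
    cases b <;> simp [hσ]

include hswap hN hS in
lemma abs_ncard_neighborSet_sub_le [Fintype V] [DecidableEq ι]
    (hbal : |(#{w ∈ N | halfEdgeColor c α β (w, σ w) = i} : ℤ) -
      #{w ∈ N | halfEdgeColor c α β (w, !σ w) = i}| ≤ 1) :
    |(((G.edgeColorClass (c ∘ swapIfMeets α β S) i).neighborSet α).ncard : ℤ) -
      ((G.edgeColorClass (c ∘ swapIfMeets α β S) i).neighborSet β).ncard| ≤ 1 := by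
  set F := G.edgeColorClass (c ∘ swapIfMeets α β S) i
  have hdiff : ∀ b : Bool, F.neighborSet (bif b then β else α) \ {bif b then α else β} =
      ↑({w ∈ N | halfEdgeColor c α β (w, b ^^ σ w) = i}) := by
    intro b
    rw [neighborSet_edgeColorClass_diff_singleton (N := N) (by cases b <;> simp [hN])
      fun w => adj_cond_iff_mem hswap hN b]
    exact congrArg _ (filter_congr fun w hw => by
      simp [swapIfMeets_cond hN hS hw, halfEdgeColor])
  have h₀ := hdiff false
  have h₁ := hdiff true
  simp only [cond_false, cond_true, Bool.false_xor, Bool.true_xor] at h₀ h₁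
  rwa [Set.ncard_sub_ncard_eq_of_mem_iff (A := F.neighborSet α) (B := F.neighborSet β)
    (a := β) (b := α) (F.adj_comm _ _), h₀, h₁, Set.ncard_coe_finset, Set.ncard_coe_finset]

include hswap hN in
lemma mem_of_edgeColorClass_adj_cond {x : V × Bool}
    (h : (G.edgeColorClass c i).Adj (bif x.2 then β else α) x.1) (hxα : x.1 ≠ α)
    (hxβ : x.1 ≠ β) :
    x.1 ∈ N ∧ halfEdgeColor c α β x = i :=
  ⟨(adj_cond_iff_mem hswap hN x.2 (by cases x.2 <;> assumption)).mp h.1, h.2⟩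

include hswap hN hS in
lemma edgeColorClass_swapIfMeets_adj {w : V} {b : Bool} (hw : w ∈ N)
    (hc : halfEdgeColor c α β (w, b) = i) :
    (G.edgeColorClass (c ∘ swapIfMeets α β S) i).Adj (bif b ^^ σ w then β else α) w := by
  obtain ⟨hwα, hwβ⟩ := (hN w).mp hw
  refine ⟨(adj_cond_iff_mem hswap hN _ ?_).mpr hw, ?_⟩
  · cases b ^^ σ w
    exacts [(G.ne_of_adj hwβ).symm, (G.ne_of_adj hwα).symm]
  · rw [Function.comp_apply, swapIfMeets_cond hN hS hw, Bool.xor_assoc, Bool.xor_self,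
      Bool.xor_false]
    exact hc

include hswap hN hS in
lemma reachable_of_separated {x y : V × Bool} (hx : x.1 ∈ N) (hy : y.1 ∈ N)
    (hcx : halfEdgeColor c α β x = i) (hcy : halfEdgeColor c α β y = i)
    (hσ : x.2 = σ x.1 ∧ y.2 = !σ y.1) (p : (G.edgeColorClass c i).Walk x.1 y.1)
    (hαp : α ∉ p.support) (hβp : β ∉ p.support) :
    (G.edgeColorClass (c ∘ swapIfMeets α β S) i).Reachable α β := by
  have hαx := edgeColorClass_swapIfMeets_adj hswap hN hS hx hcx
  have hβy := edgeColorClass_swapIfMeets_adj hswap hN hS hy hcy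
  simp only [hσ, Bool.xor_self, Bool.not_xor_self, cond_false, cond_true] at hαx hβy
  refine (hαx.reachable.trans ?_).trans hβy.reachable.symm
  refine p.reachable_of_adj_imp fun u hu v hv huv => ⟨huv.1, ?_⟩
  rw [Function.comp_apply, swapIfMeets_of_ne (ne_of_mem_of_not_mem hu hαp)
    (ne_of_mem_of_not_mem hu hβp) (ne_of_mem_of_not_mem hv hαp) (ne_of_mem_of_not_mem hv hβp)]
  exact huv.2

end Recoloring

theorem exists_balanced_connected_recoloring {V ι : Type*} [Fintype V] [DecidableEq V]
    {G : SimpleGraph V} {α β : V} (hαβ : α ≠ β)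
    (hswap : ∀ u v, G.Adj u v ↔ G.Adj (Equiv.swap α β u) (Equiv.swap α β v)) (c : Sym2 V → ι)
    (hcomp : ∀ i, (G.edgeColorClass c i).Reachable α β ∨
      (∃ p : (G.edgeColorClass c i).Walk α α, p.IsCycle) ∨
      ∃ p : (G.edgeColorClass c i).Walk β β, p.IsCycle) :
    ∃ S : Finset V, α ∉ S ∧ β ∉ S ∧ ∀ i,
      |(((G.edgeColorClass (c ∘ swapIfMeets α β S) i).neighborSet α).ncard : ℤ) -
          ((G.edgeColorClass (c ∘ swapIfMeets α β S) i).neighborSet β).ncard| ≤ 1 ∧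
        (G.edgeColorClass (c ∘ swapIfMeets α β S) i).Reachable α β := by
  classical
  obtain ⟨N, hN⟩ : ∃ N : Finset V, ∀ w, w ∈ N ↔ G.Adj α w ∧ G.Adj β w :=
    ⟨({w | G.Adj α w ∧ G.Adj β w} : Finset V), fun w => by simp⟩
  obtain ⟨σ, hbal, hsep⟩ := exists_balanced_orientation N (halfEdgeColor c α β)
    (fun i x y => (x.1 ∈ N ∧ y.1 ∈ N ∧ halfEdgeColor c α β x = i ∧ halfEdgeColor c α β y = i ∧
      x ≠ y) ∧ ∃ p : (G.edgeColorClass c i).Walk x.1 y.1, α ∉ p.support ∧ β ∉ p.support)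
    fun _ _ _ h => h.1
  obtain ⟨S, hS⟩ : ∃ S : Finset V, ∀ w, w ∈ S ↔ w ∈ N ∧ σ w :=
    ⟨{w ∈ N | σ w}, fun w => by simp⟩
  obtain ⟨hαS, hβS⟩ := notMem_of_forall_mem_iff hN hS
  refine ⟨S, hαS, hβS, fun i => ⟨abs_ncard_neighborSet_sub_le hswap hN hS (hbal i), ?_⟩⟩
  by_cases hadj : (G.edgeColorClass c i).Adj α β
  · refine Adj.reachable ⟨hadj.1, ?_⟩
    rw [Function.comp_apply, swapIfMeets_of_notMem hαS hβS]
    exact hadj.2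
  obtain ⟨x, y, hxy, hx, hy, p, hαp, hβp⟩ :=
    exists_walk_avoiding_of_reachable_or_isCycle hαβ hadj (hcomp i)
  have hxp := p.start_mem_support
  have hyp := p.end_mem_support
  obtain ⟨hxN, hcx⟩ := mem_of_edgeColorClass_adj_cond hswap hN hx (ne_of_mem_of_not_mem hxp hαp)
    (ne_of_mem_of_not_mem hxp hβp)
  obtain ⟨hyN, hcy⟩ := mem_of_edgeColorClass_adj_cond hswap hN hy (ne_of_mem_of_not_mem hyp hαp)
    (ne_of_mem_of_not_mem hyp hβp)
  obtain ⟨x, y, ⟨⟨hxN, hyN, hcx, hcy, -⟩, p, hαp, hβp⟩, hσ | hσ⟩ :=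
    hsep i ⟨x, y, ⟨hxN, hyN, hcx, hcy, hxy⟩, p, hαp, hβp⟩
  · exact reachable_of_separated hswap hN hS hxN hyN hcx hcy hσ p hαp hβp
  · exact reachable_of_separated hswap hN hS hyN hxN hcy hcx hσ.symm p.reverse (by simpa)
      (by simpa)

end SimpleGraph

open SimpleGraph Sym2 in
theorem connecting_lemma
    {V : Type*} [Fintype V] [DecidableEq V] (G : SimpleGraph V) (α β : V)
    (hswap : ∀ u v, G.Adj u v ↔ G.Adj (Equiv.swap α β u) (Equiv.swap α β v))
    (t : ℕ) (Gi : Fin t → SimpleGraph V)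
    (hle : ∀ i, Gi i ≤ G)
    (hpart : ∀ e ∈ G.edgeSet, ∃! i, e ∈ (Gi i).edgeSet)
    (hcomp : ∀ i, (Gi i).Reachable α β ∨
      (∃ c : (Gi i).Walk α α, c.IsCycle) ∨ (∃ c : (Gi i).Walk β β, c.IsCycle)) :
    ∃ F : Fin t → SimpleGraph V,
      (∀ i, F i ≤ G) ∧
      (∀ e ∈ G.edgeSet, ∃! i, e ∈ (F i).edgeSet) ∧
      -- (1) same number of edges
      (∀ i, (F i).edgeSet.ncard = (Gi i).edgeSet.ncard) ∧
      -- (2) vertices other than α, β keep their degrees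
      (∀ i, ∀ v, v ≠ α → v ≠ β →
        ((F i).neighborSet v).ncard = ((Gi i).neighborSet v).ncard) ∧
      -- (3) same edges among vertices other than α and β
      (∀ i, ∀ u v, u ≠ α → u ≠ β → v ≠ α → v ≠ β → ((F i).Adj u v ↔ (Gi i).Adj u v)) ∧
      -- (4) almost regular on {α, β}
      (∀ i, |(((F i).neighborSet α).ncard : ℤ) - (((F i).neighborSet β).ncard : ℤ)| ≤ 1) ∧
      -- (5) α and β in the same component of F i
      (∀ i, (F i).Reachable α β) := by
  by_cases hαβ : α = β
  · subst hαβ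
    exact ⟨Gi, hle, hpart, fun _ => rfl, fun _ _ _ _ => rfl, fun _ _ _ _ _ _ _ => .rfl, by simp,
      fun _ => .rfl⟩
  cases isEmpty_or_nonempty (Fin t)
  · exact ⟨Gi, hle, hpart, isEmptyElim, isEmptyElim, isEmptyElim, isEmptyElim, isEmptyElim⟩
  obtain ⟨c, rfl⟩ := exists_eq_edgeColorClass hle hpart
  obtain ⟨S, hαS, hβS, hS⟩ := exists_balanced_connected_recoloring hαβ hswap c hcomp
  refine ⟨G.edgeColorClass (c ∘ swapIfMeets α β S), fun _ => edgeColorClass_le,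
    fun _ he => existsUnique_mem_edgeSet_edgeColorClass he,
    fun _ => ncard_edgeSet_edgeColorClass_comp (swapIfMeets_involutive hαS hβS)
      (swapIfMeets_mem_edgeSet_iff hswap),
    fun i v hvα hvβ => ?_,
    fun i u v huα huβ hvα hvβ => by simp [swapIfMeets_of_ne huα huβ hvα hvβ],
    fun i => (hS i).1, fun i => (hS i).2⟩
  by_cases hv : v ∈ S
  · refine ncard_neighborSet_edgeColorClass_comp (Equiv.swap_apply_self α β)
      (swapIfMeets_of_mem hαS hβS hv) fun w => ?_
    rw [hswap v, Equiv.swap_apply_of_ne_of_ne hvα hvβ, Equiv.swap_apply_self]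
  · exact ncard_neighborSet_edgeColorClass_comp (fun _ => rfl : Function.Involutive id)
      (swapIfMeets_of_notMem_of_ne hαS hβS hv hvα hvβ) fun _ => .rfl
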